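/- Let (X_n, F_n)_{n∈ℕ} be an adapted sequence of real random variables with |X_n| ≤ a₁/2 almost surely for all n (a₁ > 0), and let (τ_m)_{m∈ℕ} be a sequence of stopping times with respect to (F_n)_{n∈ℕ} such that for every m and every sample point ω, either τ_m(ω) < τ_{m+1}(ω) or τ_m(ω) = τ_{m+1}(ω) = +∞. Define Y_m := X_{τ_m + 1} − E[X_{τ_m + 1} | F_{τ_m}] and G_m := F_{τ_{m+1}}. Then for every δ ∈ (0,1), with probability at least 1 − δ it holds simultaneously for all m ≥ 1 that |∑_{i=1}^{m} Y_i| ≤ 2·√( (∑_{i=1}^{m} Var(Y_i | G_{i−1})) · ln(4m/δ) ) + 4a₁·ln(4m/δ), where Var(Y_i | G_{i−1}) := E[Y_i² | G_{i−1}] − (E[Y_i | G_{i−1}])². In particular the same bound holds with m replaced by any ℕ-valued random variable N. -/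

import Mathlib

open MeasureTheory

/-- The value of the process `X` at the (possibly infinite) random time `τ`, with the
convention `X_∞ := 0`. -/
noncomputable def stoppedVal {Ω : Type*} (X : ℕ → Ω → ℝ) (τ : Ω → ℕ∞) (ω : Ω) : ℝ :=
  if h : τ ω ≠ ⊤ then X ((τ ω).untop h) ω else 0

/-- The σ-algebra at the (possibly infinite) stopping time `τ`:
events `A` (measurable in the ambient σ-algebra) such that `A ∩ {τ = n} ∈ F n` for all `n`. -/
def sigmaAt {Ω : Type*} (m0 : MeasurableSpace Ω) (F : Filtration ℕ m0)
    (τ : Ω → ℕ∞) (hτ : ∀ n : ℕ, MeasurableSet[F n] {ω | τ ω = (n : ℕ∞)}) :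
    MeasurableSpace Ω where
  MeasurableSet' A := MeasurableSet[m0] A ∧
    ∀ n : ℕ, MeasurableSet[F n] (A ∩ {ω | τ ω = (n : ℕ∞)})
  measurableSet_empty :=
    ⟨MeasurableSet.empty, fun n => by simp⟩
  measurableSet_compl := fun A hA => by
    refine ⟨hA.1.compl, fun n => ?_⟩
    have hset : Aᶜ ∩ {ω | τ ω = (n : ℕ∞)} =
        {ω | τ ω = (n : ℕ∞)} \ (A ∩ {ω | τ ω = (n : ℕ∞)}) := by
      ext ω
      simp only [Set.mem_inter_iff, Set.mem_compl_iff, Set.mem_diff, Set.mem_setOf_eq]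
      tauto
    rw [hset]
    exact (hτ n).diff (hA.2 n)
  measurableSet_iUnion := fun s hs => by
    refine ⟨MeasurableSet.iUnion fun i => (hs i).1, fun n => ?_⟩
    rw [Set.iUnion_inter]
    exact MeasurableSet.iUnion fun i => (hs i).2 n

/-!
For `t = ((k + 1) a)⁻¹` the process `exp (t Sₙ - ¾ t² Vₙ)`, where `Sₙ = ∑_{i ≤ n} Yᵢ` and
`Vₙ = ∑_{i ≤ n} E[Yᵢ² | 𝒢_{i-1}]`, is a nonnegative supermartingale, because
`exp x ≤ 1 + x + ¾ x²` for `|x| ≤ 1`. Ville's maximal inequality bounds the probability that it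
ever exceeds `4 (k + 1) (k + 2) / δ`, and a union bound over `k` and over `±Y` costs `δ / 2`.
Off this bad event, `Sₘ ≤ (k + 1) a L + ¾ Vₘ / ((k + 1) a)` for every `k` with
`(k + 1) (k + 2) ≤ m`, where `L = log (4m / δ)`; taking `k = 0` when `Vₘ ≤ 4a²L` and `k + 1 ≈ √(Vₘ / (a² L))` otherwise gives
`2 √(Vₘ L) + 4aL`. Finally, the skipped increments `X_{τₘ+1} - E[X_{τₘ+1} | F_{τₘ}]` form a bounded
martingale difference sequence for `G`, since `τₘ + 1 ≤ τₘ₊₁` makes them `F_{τₘ₊₁}`-measurable.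
-/

open Real

section StoppedVal

variable {Ω : Type*} {m0 : MeasurableSpace Ω} {F : Filtration ℕ m0} {τ σ : Ω → ℕ∞}

lemma stoppedVal_of_eq_coe {X : ℕ → Ω → ℝ} {ω : Ω} {n : ℕ} (h : τ ω = n) :
    stoppedVal X τ ω = X n ω := by
  simp only [stoppedVal, h]
  rfl

lemma stoppedVal_of_eq_top {X : ℕ → Ω → ℝ} {ω : Ω} (h : τ ω = ⊤) : stoppedVal X τ ω = 0 := by
  simp [stoppedVal, h]

lemma abs_stoppedVal_le {X : ℕ → Ω → ℝ} {ω : Ω} {C : ℝ} (hC : 0 ≤ C) (hX : ∀ n, |X n ω| ≤ C) :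
    |stoppedVal X τ ω| ≤ C := by
  unfold stoppedVal
  split_ifs <;> simp [hX, hC]

lemma measurableSet_add_one_eq (hτ : ∀ n : ℕ, MeasurableSet[F n] {ω | τ ω = n}) (n : ℕ) :
    MeasurableSet[F n] {ω | τ ω + 1 = n} := by
  cases n with
  | zero => simp
  | succ k =>
    have hset : {ω | τ ω + 1 = ↑(k + 1)} = {ω | τ ω = k} := by
      ext ω
      simp
    exact hset ▸ F.mono k.le_succ _ (hτ k)

variable {hτ : ∀ n : ℕ, MeasurableSet[F n] {ω | τ ω = n}}
  {hσ : ∀ n : ℕ, MeasurableSet[F n] {ω | σ ω = n}}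

lemma sigmaAt_le : sigmaAt m0 F τ hτ ≤ m0 := fun _ hA => hA.1

lemma measurableSet_inter_le_of_sigmaAt {A : Set Ω} (hA : MeasurableSet[sigmaAt m0 F τ hτ] A)
    (n : ℕ) : MeasurableSet[F n] (A ∩ {ω | τ ω ≤ n}) := by
  have hset : A ∩ {ω | τ ω ≤ n} = ⋃ k ≤ n, A ∩ {ω | τ ω = k} := by
    ext ω
    simp only [Set.mem_inter_iff, Set.mem_ofPred_eq, Set.mem_iUnion, exists_prop]
    induction τ ω using ENat.recTopCoe <;> simp [and_comm]
  rw [hset]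
  exact MeasurableSet.biUnion (Set.to_countable _) fun k hk => F.mono hk _ (hA.2 k)

lemma sigmaAt_mono (h : τ ≤ σ) : sigmaAt m0 F τ hτ ≤ sigmaAt m0 F σ hσ := by
  refine fun A hA => ⟨hA.1, fun n => ?_⟩
  have hset : A ∩ {ω | σ ω = n} = A ∩ {ω | τ ω ≤ n} ∩ {ω | σ ω = n} := by
    ext ω
    simp only [Set.mem_inter_iff, Set.mem_ofPred_eq]
    exact ⟨fun ⟨hA, hσ⟩ => ⟨⟨hA, hσ ▸ h ω⟩, hσ⟩, fun ⟨⟨hA, _⟩, hσ⟩ => ⟨hA, hσ⟩⟩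
  rw [hset]
  exact (measurableSet_inter_le_of_sigmaAt hA n).inter (hσ n)

lemma measurableSet_sigmaAt_of_inter {A : Set Ω}
    (hA : ∀ n : ℕ, MeasurableSet[F n] (A ∩ {ω | τ ω = n}))
    (htop : MeasurableSet[m0] (A ∩ {ω | τ ω = ⊤})) : MeasurableSet[sigmaAt m0 F τ hτ] A := by
  refine ⟨?_, hA⟩
  have hset : A = (⋃ n : ℕ, A ∩ {ω | τ ω = n}) ∪ (A ∩ {ω | τ ω = ⊤}) := by
    ext ω
    simp only [Set.mem_union, Set.mem_inter_iff, Set.mem_ofPred_eq, Set.mem_iUnion]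
    induction τ ω using ENat.recTopCoe <;> simp
  rw [hset]
  exact (MeasurableSet.iUnion fun n => F.le n _ (hA n)).union htop

lemma measurable_stoppedVal {X : ℕ → Ω → ℝ} (hX : Adapted F X) :
    Measurable[sigmaAt m0 F τ hτ] (stoppedVal X τ) := by
  intro B hB
  refine measurableSet_sigmaAt_of_inter (fun n => ?_) ?_
  · have hset : stoppedVal X τ ⁻¹' B ∩ {ω | τ ω = n} = X n ⁻¹' B ∩ {ω | τ ω = n} := by
      ext ω
      simp only [Set.mem_inter_iff, Set.mem_preimage, Set.mem_ofPred_eq]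
      exact and_congr_left fun h => by rw [stoppedVal_of_eq_coe h]
    rw [hset]
    exact (hX n hB).inter (hτ n)
  · have hset : stoppedVal X τ ⁻¹' B ∩ {ω | τ ω = ⊤} =
        {_ω | (0 : ℝ) ∈ B} ∩ (⋃ n : ℕ, {ω | τ ω = n})ᶜ := by
      ext ω
      simp only [Set.mem_inter_iff, Set.mem_preimage, Set.mem_ofPred_eq, Set.mem_compl_iff,
        Set.mem_iUnion, not_exists]
      induction h : τ ω using ENat.recTopCoe <;> simp [stoppedVal_of_eq_top, h]
    rw [hset]
    exact (MeasurableSet.const _).inter (MeasurableSet.iUnion fun n => F.le n _ (hτ n)).compl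

end StoppedVal

lemma exp_three_le : exp 3 ≤ 21 := by
  have h : exp 3 = exp 1 ^ 3 := by rw [exp_one_pow]; norm_num
  rw [h]
  nlinarith [pow_le_pow_left₀ (exp_pos 1).le exp_one_lt_d9.le 3]

lemma three_le_log_four_mul_div {m δ : ℝ} (hm : 1 ≤ m) (hδ0 : 0 < δ) (hδ1 : δ ≤ 1)
    (h : 4 * log (4 * m / δ) ≤ m) : 3 ≤ log (4 * m / δ) := by
  have h4m : 4 * m ≤ 4 * m / δ := le_div_self (by positivity) hδ0 hδ1
  have hlog4 : log 4 ≤ log (4 * m / δ) := log_le_log (by norm_num) (by linarith)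
  have hlog2 : log 4 = 2 * log 2 := by
    rw [show (4 : ℝ) = 2 ^ 2 by norm_num, log_pow]; norm_num
  have := log_two_gt_d9
  rw [le_log_iff_exp_le (by positivity)]
  linarith [exp_three_le]

lemma le_two_sqrt_mul_add_of_small {a s v L : ℝ} (ha : 0 < a) (hL : log 2 ≤ L) (hv0 : 0 ≤ v)
    (hv : v ≤ 4 * a ^ 2 * L) (hs : s ≤ a * (L + log 2) + 3 / 4 * v / a) :
    s ≤ 2 * √(v * L) + 4 * a * L := by
  set r := √(v * L)
  have hL0 : 0 ≤ L := (log_nonneg one_le_two).trans hL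
  have hr : r ^ 2 = v * L := sq_sqrt (by positivity)
  have hr0 : 0 ≤ r := sqrt_nonneg _
  have hvr : v ≤ 2 * a * r := by
    nlinarith [mul_le_mul_of_nonneg_left hv hv0, mul_nonneg ha.le hr0]
  have hvar : 3 / 4 * v / a ≤ 3 / 2 * r := by
    rw [div_le_iff₀ ha]; linarith
  nlinarith

lemma le_two_sqrt_mul_add_of_forall_of_large {a δ s v : ℝ} {m : ℕ} (ha : 0 < a) (hδ0 : 0 < δ)
    (hL3 : 3 ≤ log (4 * m / δ)) (hv : 4 * a ^ 2 * log (4 * m / δ) ≤ v) (hvm : v ≤ m * a ^ 2)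
    (H : ∀ k : ℕ, s ≤ (k + 1) * a * log (4 * ((k + 1) * (k + 2)) / δ) + 3 / 4 * v / ((k + 1) * a)) :
    s ≤ 2 * √(v * log (4 * m / δ)) + a * log (4 * m / δ) := by
  set L := log (4 * m / δ)
  set r := √(v * L)
  have hL0 : 0 < L := by linarith
  have hv0 : 0 < v := by nlinarith
  have hr : r ^ 2 = v * L := sq_sqrt (by positivity)
  have hr0 : 0 < r := sqrt_pos.mpr (by positivity)
  -- `w` balances `w a L` against `v / (w a)`, and `k + 1` is the first integer above it.
  set w := r / (a * L)
  have hwaL : w * (a * L) = r := div_mul_cancel₀ _ (by positivity)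
  have hw2 : 2 ≤ w := by
    rw [le_div_iff₀ (by positivity)]; nlinarith
  set k := ⌊w⌋₊
  have hkw : w < k + 1 := Nat.lt_floor_add_one w
  have hwk : (k : ℝ) + 1 ≤ w + 1 := by linarith [Nat.floor_le (by linarith : 0 ≤ w)]
  have hkm : ((k : ℝ) + 1) * (k + 2) ≤ m := by
    have hvw : w ^ 2 * L * a ^ 2 = v := by
      field_simp
      nlinarith
    have hwL : w ^ 2 * L ≤ m :=
      le_of_mul_le_mul_right (hvw.trans_le hvm) (by positivity)
    have hw3 : 3 * w ^ 2 ≤ m := by nlinarith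
    nlinarith
  have hlog : log (4 * ((k + 1) * (k + 2)) / δ) ≤ L := log_le_log (by positivity) (by gcongr)
  calc s ≤ (k + 1) * a * L + 3 / 4 * v / ((k + 1) * a) := by
        refine (H k).trans ?_
        gcongr
    _ ≤ (w + 1) * a * L + 3 / 4 * v / (w * a) := by gcongr
    _ = 7 / 4 * r + a * L := by
        field_simp
        nlinarith
    _ ≤ 2 * r + a * L := by linarith

lemma le_two_sqrt_mul_log_add_of_forall {a δ s v : ℝ} {m : ℕ} (ha : 0 < a) (hδ0 : 0 < δ)
    (hδ1 : δ ≤ 1) (hm : 1 ≤ m) (hv0 : 0 ≤ v) (hvm : v ≤ m * a ^ 2)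
    (H : ∀ k : ℕ, s ≤ (k + 1) * a * log (4 * ((k + 1) * (k + 2)) / δ) + 3 / 4 * v / ((k + 1) * a)) :
    s ≤ 2 * √(v * log (4 * m / δ)) + 4 * a * log (4 * m / δ) := by
  set L := log (4 * m / δ)
  have hm1 : (1 : ℝ) ≤ m := by exact_mod_cast hm
  have h4m : 4 * (m : ℝ) ≤ 4 * m / δ := le_div_self (by positivity) hδ0 hδ1
  have hL2 : log 2 ≤ L := log_le_log two_pos (by linarith)
  rcases le_or_gt v (4 * a ^ 2 * L) with hv | hv
  · have h8 : log (8 / δ) ≤ L + log 2 := by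
      calc log (8 / δ) ≤ log (2 * (4 * m / δ)) :=
            log_le_log (by positivity) (by rw [mul_div_assoc']; gcongr; linarith)
        _ = L + log 2 := by rw [log_mul two_ne_zero (by positivity)]; ring
    have H0 := H 0
    norm_num at H0
    refine le_two_sqrt_mul_add_of_small ha hL2 hv0 hv (H0.trans ?_)
    gcongr
  · have hL3 := three_le_log_four_mul_div hm1 hδ0 hδ1 (by nlinarith)
    have := le_two_sqrt_mul_add_of_forall_of_large ha hδ0 hL3 hv.le hvm H
    nlinarith

lemma le_mul_log_add_of_exp_lt {c s v C : ℝ} (hc : 0 < c)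
    (h : exp (c⁻¹ * s - 3 / 4 * c⁻¹ ^ 2 * v) < C) : s ≤ c * log C + 3 / 4 * v / c := by
  have hlog := (lt_log_iff_exp_lt ((exp_pos _).trans h)).mpr h
  have key : s = c * (c⁻¹ * s - 3 / 4 * c⁻¹ ^ 2 * v) + 3 / 4 * v / c := by
    field_simp
    ring
  rw [key]
  gcongr

lemma hasSum_one_div_succ_mul_succ : HasSum (fun k : ℕ => 1 / (((k : ℝ) + 1) * (k + 2))) 1 := by
  rw [hasSum_iff_tendsto_nat_of_nonneg (fun k => by positivity)]
  have hpartial : ∀ n : ℕ,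
      ∑ k ∈ Finset.range n, 1 / (((k : ℝ) + 1) * (k + 2)) = 1 - 1 / (n + 1) := by
    intro n
    induction n with
    | zero => simp
    | succ n ih =>
      rw [Finset.sum_range_succ, ih]
      push_cast
      field_simp
      ring
  simp only [hpartial]
  simpa using (tendsto_const_nhds (x := (1 : ℝ))).sub tendsto_one_div_add_atTop_nhds_zero_nat

lemma exp_le_one_add_add_sq {x : ℝ} (hx : |x| ≤ 1) : exp x ≤ 1 + x + 3 / 4 * x ^ 2 := by
  have h := Real.exp_bound hx two_pos
  have h2 : ∑ i ∈ Finset.range 2, x ^ i / i.factorial = 1 + x := by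
    simp [Finset.sum_range_succ]
  norm_num [h2, sq_abs] at h
  linarith [(abs_le.mp h).2, sq_abs x]

section CondExp

variable {Ω : Type*} {m m0 : MeasurableSpace Ω} {μ : Measure Ω} [IsFiniteMeasure μ]

lemma integrable_exp_mul_of_ae_abs_le {Y : Ω → ℝ} {a : ℝ} (hY : AEStronglyMeasurable Y μ)
    (hbdd : ∀ᵐ ω ∂μ, |Y ω| ≤ a) (t : ℝ) : Integrable (fun ω => exp (t * Y ω)) μ := by
  refine .of_bound (continuous_exp.comp_aestronglyMeasurable (hY.const_mul t)) (exp (|t| * a)) ?_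
  filter_upwards [hbdd] with ω h
  rw [Real.norm_eq_abs, abs_exp, exp_le_exp]
  refine (le_abs_self _).trans ?_
  rw [abs_mul]
  gcongr

lemma condExp_exp_mul_le (hm : m ≤ m0) {Y : Ω → ℝ} {a t : ℝ} (hY : AEStronglyMeasurable Y μ)
    (hbdd : ∀ᵐ ω ∂μ, |Y ω| ≤ a) (hzero : μ[Y|m] =ᵐ[μ] 0) (ht : |t| * a ≤ 1) :
    μ[fun ω => exp (t * Y ω)|m] ≤ᵐ[μ] fun ω => 1 + 3 / 4 * t ^ 2 * μ[fun ω => Y ω ^ 2|m] ω := by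
  have hYint : Integrable Y μ := .of_bound hY a (by simpa only [Real.norm_eq_abs] using hbdd)
  have hY2int : Integrable (fun ω => Y ω ^ 2) μ := by
    refine .of_bound (hY.pow 2) (a ^ 2) ?_
    filter_upwards [hbdd] with ω h
    simpa only [norm_pow, Real.norm_eq_abs] using pow_le_pow_left₀ (abs_nonneg _) h 2
  have htY : ∀ᵐ ω ∂μ, |t * Y ω| ≤ 1 := by
    filter_upwards [hbdd] with ω h
    rw [abs_mul]
    exact (mul_le_mul_of_nonneg_left h (abs_nonneg t)).trans ht
  have hquad : μ[(fun _ => (1 : ℝ)) + (t • Y + (3 / 4 * t ^ 2) • fun ω => Y ω ^ 2)|m] =ᵐ[μ]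
      (fun _ => 1) + (t • μ[Y|m] + (3 / 4 * t ^ 2) • μ[fun ω => Y ω ^ 2|m]) := by
    filter_upwards [condExp_add (integrable_const (1 : ℝ))
        ((hYint.smul t).add (hY2int.smul (3 / 4 * t ^ 2))) m,
      condExp_add (hYint.smul t) (hY2int.smul (3 / 4 * t ^ 2)) m, condExp_smul t Y m,
      condExp_smul (3 / 4 * t ^ 2) (fun ω => Y ω ^ 2) m] with ω h1 h2 h3 h4
    simp only [Pi.add_apply, Pi.smul_apply] at *
    rw [h1, h2, h3, h4, condExp_const hm]
  have hpt : (fun ω => exp (t * Y ω)) ≤ᵐ[μ]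
      (fun _ => (1 : ℝ)) + (t • Y + (3 / 4 * t ^ 2) • fun ω => Y ω ^ 2) := by
    filter_upwards [htY] with ω h
    simpa [mul_pow, ← add_assoc, mul_assoc] using exp_le_one_add_add_sq h
  filter_upwards [condExp_mono (m := m) (integrable_exp_mul_of_ae_abs_le hY hbdd t)
      ((integrable_const _).add ((hYint.smul t).add (hY2int.smul (3 / 4 * t ^ 2)))) hpt,
    hquad, hzero] with ω h1 h2 h3
  rw [h2] at h1
  simp only [Pi.add_apply, Pi.smul_apply, h3, Pi.zero_apply, smul_eq_mul] at h1
  linarith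

end CondExp

section Ville

variable {Ω : Type*} {m0 : MeasurableSpace Ω} {μ : Measure Ω} [IsFiniteMeasure μ]
  {𝒢 : Filtration ℕ m0} {f : ℕ → Ω → ℝ}

lemma MeasureTheory.Supermartingale.mul_measureReal_exists_le_le (hf : Supermartingale f 𝒢 μ)
    (hnonneg : ∀ n ω, 0 ≤ f n ω) {C : ℝ} (hC : 0 ≤ C) (N : ℕ) :
    C * μ.real {ω | ∃ n ≤ N, C ≤ f n ω} ≤ ∫ ω, f 0 ω ∂μ := by
  set τ : Ω → WithTop ℕ := fun ω => (hittingBtwn f (Set.Ici C) 0 N ω : ℕ)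
  have hτ : IsStoppingTime 𝒢 τ :=
    hf.stronglyAdapted.adapted.isStoppingTime_hittingBtwn measurableSet_Ici
  have hτN : ∀ ω, τ ω ≤ N := fun ω => WithTop.coe_le_coe.mpr (hittingBtwn_le ω)
  have hsub : {ω | ∃ n ≤ N, C ≤ f n ω} ⊆ {ω | C ≤ stoppedValue f τ ω} :=
    fun ω ⟨n, hn, hCn⟩ => stoppedValue_hittingBtwn_mem ⟨n, ⟨Nat.zero_le _, hn⟩, hCn⟩
  have hstop : ∫ ω, stoppedValue f τ ω ∂μ ≤ ∫ ω, f 0 ω ∂μ := by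
    have h := hf.neg.expected_stoppedValue_mono (isStoppingTime_const 𝒢 0) hτ
      (fun ω => WithTop.coe_le_coe.mpr (Nat.zero_le _)) hτN
    simp only [stoppedValue_const, stoppedValue_neg, Pi.neg_apply, integral_neg] at h
    exact neg_le_neg_iff.mp h
  calc C * μ.real {ω | ∃ n ≤ N, C ≤ f n ω} ≤ C * μ.real {ω | C ≤ stoppedValue f τ ω} :=
        mul_le_mul_of_nonneg_left (measureReal_mono hsub) hC
    _ ≤ ∫ ω, stoppedValue f τ ω ∂μ :=
        mul_meas_ge_le_integral_of_nonneg (ae_of_all _ fun ω => hnonneg _ ω)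
          (integrable_stoppedValue ℕ hτ hf.integrable hτN) C
    _ ≤ ∫ ω, f 0 ω ∂μ := hstop

lemma MeasureTheory.Supermartingale.measure_exists_le_le (hf : Supermartingale f 𝒢 μ)
    (hnonneg : ∀ n ω, 0 ≤ f n ω) {C : ℝ} (hC : 0 < C) :
    μ {ω | ∃ n, C ≤ f n ω} ≤ ENNReal.ofReal ((∫ ω, f 0 ω ∂μ) / C) := by
  have hU : {ω | ∃ n, C ≤ f n ω} = ⋃ N : ℕ, {ω | ∃ n ≤ N, C ≤ f n ω} := by
    ext ω
    simp only [Set.mem_ofPred_eq, Set.mem_iUnion]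
    exact ⟨fun ⟨n, hn⟩ => ⟨n, n, le_rfl, hn⟩, fun ⟨_, n, _, hn⟩ => ⟨n, hn⟩⟩
  have hmono : Monotone fun N : ℕ => {ω | ∃ n ≤ N, C ≤ f n ω} :=
    fun _ _ hij _ ⟨n, hn, h⟩ => ⟨n, hn.trans hij, h⟩
  rw [hU, hmono.measure_iUnion]
  refine iSup_le fun N => ?_
  rw [ENNReal.le_ofReal_iff_toReal_le (measure_ne_top μ _)
    (div_nonneg (integral_nonneg (hnonneg 0)) hC.le), le_div_iff₀ hC, mul_comm]
  exact hf.mul_measureReal_exists_le_le hnonneg hC.le N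

end Ville

section Freedman

variable {Ω : Type*} {m0 : MeasurableSpace Ω} {μ : Measure Ω} {𝒢 : Filtration ℕ m0}
  {Y : ℕ → Ω → ℝ} {a t : ℝ}

structure IsBoundedMartingaleDiff (μ : Measure Ω) (𝒢 : Filtration ℕ m0) (Y : ℕ → Ω → ℝ)
    (a : ℝ) : Prop where
  stronglyMeasurable : ∀ i, 1 ≤ i → StronglyMeasurable[𝒢 i] (Y i)
  abs_le : ∀ i, 1 ≤ i → ∀ᵐ ω ∂μ, |Y i ω| ≤ a
  condExp_eq_zero : ∀ i, 1 ≤ i → μ[Y i|𝒢 (i - 1)] =ᵐ[μ] 0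

noncomputable def predictableQuadVar (μ : Measure Ω) (𝒢 : Filtration ℕ m0) (Y : ℕ → Ω → ℝ)
    (n : ℕ) (ω : Ω) : ℝ :=
  ∑ i ∈ Finset.Icc 1 n, μ[fun ω => Y i ω ^ 2|𝒢 (i - 1)] ω

noncomputable def freedmanProcess (μ : Measure Ω) (𝒢 : Filtration ℕ m0) (Y : ℕ → Ω → ℝ)
    (t : ℝ) (n : ℕ) (ω : Ω) : ℝ :=
  exp (t * ∑ i ∈ Finset.Icc 1 n, Y i ω - 3 / 4 * t ^ 2 * predictableQuadVar μ 𝒢 Y n ω)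

lemma predictableQuadVar_neg :
    predictableQuadVar μ 𝒢 (fun i => -Y i) = predictableQuadVar μ 𝒢 Y := by
  funext n ω
  simp only [predictableQuadVar, Pi.neg_apply, neg_sq]

lemma freedmanProcess_pos (n : ℕ) (ω : Ω) : 0 < freedmanProcess μ 𝒢 Y t n ω := exp_pos _

lemma freedmanProcess_zero : freedmanProcess μ 𝒢 Y t 0 = 1 := by
  funext ω
  simp [freedmanProcess, predictableQuadVar]

lemma freedmanProcess_succ (n : ℕ) (ω : Ω) :
    freedmanProcess μ 𝒢 Y t (n + 1) ω = freedmanProcess μ 𝒢 Y t n ω *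
      exp (-(3 / 4) * t ^ 2 * μ[fun ω => Y (n + 1) ω ^ 2|𝒢 n] ω) * exp (t * Y (n + 1) ω) := by
  simp only [freedmanProcess, predictableQuadVar, ← exp_add,
    Finset.sum_Icc_succ_top (Nat.le_add_left 1 n), Nat.add_sub_cancel]
  ring_nf

lemma stronglyMeasurable_freedmanProcess (hY : ∀ i, 1 ≤ i → StronglyMeasurable[𝒢 i] (Y i))
    (n : ℕ) : StronglyMeasurable[𝒢 n] (freedmanProcess μ 𝒢 Y t n) := by
  have hS : StronglyMeasurable[𝒢 n] fun ω => ∑ i ∈ Finset.Icc 1 n, Y i ω :=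
    Finset.stronglyMeasurable_fun_sum _ fun i hi =>
      (hY i (Finset.mem_Icc.mp hi).1).mono (𝒢.mono (Finset.mem_Icc.mp hi).2)
  have hV : StronglyMeasurable[𝒢 n] (predictableQuadVar μ 𝒢 Y n) :=
    Finset.stronglyMeasurable_fun_sum _ fun i hi =>
      stronglyMeasurable_condExp.mono (𝒢.mono (by have := (Finset.mem_Icc.mp hi).2; omega))
  exact (continuous_exp.measurable.comp
    ((hS.measurable.const_mul t).sub (hV.measurable.const_mul _))).stronglyMeasurable

namespace IsBoundedMartingaleDiff

lemma neg (hY : IsBoundedMartingaleDiff μ 𝒢 Y a) :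
    IsBoundedMartingaleDiff μ 𝒢 (fun i => -Y i) a where
  stronglyMeasurable i hi := (hY.stronglyMeasurable i hi).neg
  abs_le i hi := by
    filter_upwards [hY.abs_le i hi] with ω h
    rwa [Pi.neg_apply, abs_neg]
  condExp_eq_zero i hi := by
    filter_upwards [condExp_neg (μ := μ) (Y i) (𝒢 (i - 1)), hY.condExp_eq_zero i hi] with ω h1 h2
    simp [h1, h2]

lemma ae_predictableQuadVar_mem (hY : IsBoundedMartingaleDiff μ 𝒢 Y a) :
    ∀ᵐ ω ∂μ, ∀ n, 0 ≤ predictableQuadVar μ 𝒢 Y n ω ∧ predictableQuadVar μ 𝒢 Y n ω ≤ n * a ^ 2 := by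
  have hW : ∀ᵐ ω ∂μ, ∀ i, 1 ≤ i →
      0 ≤ μ[fun ω => Y i ω ^ 2|𝒢 (i - 1)] ω ∧ |μ[fun ω => Y i ω ^ 2|𝒢 (i - 1)] ω| ≤ a ^ 2 := by
    refine (ae_ball_iff (Set.to_countable {i : ℕ | 1 ≤ i})).mpr fun i hi => ?_
    have hsq : ∀ᵐ ω ∂μ, |Y i ω ^ 2| ≤ a ^ 2 := by
      filter_upwards [hY.abs_le i hi] with ω h
      rw [abs_pow]
      exact pow_le_pow_left₀ (abs_nonneg _) h 2
    filter_upwards [condExp_nonneg (m := 𝒢 (i - 1)) (ae_of_all μ fun ω => sq_nonneg (Y i ω)),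
      ae_bdd_abs_condExp_of_ae_bdd_abs (m := 𝒢 (i - 1)) hsq] with ω h1 h2
    exact ⟨h1, h2⟩
  filter_upwards [hW] with ω hω n
  refine ⟨Finset.sum_nonneg fun i hi => (hω i (Finset.mem_Icc.mp hi).1).1, ?_⟩
  calc predictableQuadVar μ 𝒢 Y n ω ≤ ∑ _i ∈ Finset.Icc 1 n, a ^ 2 :=
        Finset.sum_le_sum fun i hi => le_of_abs_le (hω i (Finset.mem_Icc.mp hi).1).2
    _ = n * a ^ 2 := by simp

lemma ae_freedmanProcess_le (hY : IsBoundedMartingaleDiff μ 𝒢 Y a) (ht : |t| * a ≤ 1) :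
    ∀ᵐ ω ∂μ, ∀ n, freedmanProcess μ 𝒢 Y t n ω ≤ exp n := by
  have hY' : ∀ᵐ ω ∂μ, ∀ i, 1 ≤ i → |Y i ω| ≤ a :=
    (ae_ball_iff (Set.to_countable {i : ℕ | 1 ≤ i})).mpr hY.abs_le
  filter_upwards [hY', hY.ae_predictableQuadVar_mem] with ω hYω hV n
  refine exp_le_exp.mpr ?_
  have hS : t * ∑ i ∈ Finset.Icc 1 n, Y i ω ≤ n := by
    calc t * ∑ i ∈ Finset.Icc 1 n, Y i ω ≤ |t| * ∑ i ∈ Finset.Icc 1 n, |Y i ω| := by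
          refine (le_abs_self _).trans ?_
          rw [abs_mul]
          gcongr
          exact Finset.abs_sum_le_sum_abs _ _
      _ ≤ |t| * ∑ _i ∈ Finset.Icc 1 n, a := by
          gcongr with i hi
          exact hYω i (Finset.mem_Icc.mp hi).1
      _ = n * (|t| * a) := by simp; ring
      _ ≤ n := mul_le_of_le_one_right (Nat.cast_nonneg n) ht
  nlinarith [(hV n).1, sq_nonneg t]

variable [IsFiniteMeasure μ]

lemma supermartingale_freedmanProcess (hY : IsBoundedMartingaleDiff μ 𝒢 Y a)
    (ht : |t| * a ≤ 1) : Supermartingale (freedmanProcess μ 𝒢 Y t) 𝒢 μ := by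
  set f := freedmanProcess μ 𝒢 Y t
  have hsm := stronglyMeasurable_freedmanProcess (μ := μ) (t := t) hY.stronglyMeasurable
  have hint : ∀ n, Integrable (f n) μ := fun n => by
    refine .of_bound ((hsm n).mono (𝒢.le n)).aestronglyMeasurable (exp n) ?_
    filter_upwards [hY.ae_freedmanProcess_le ht] with ω h
    rw [Real.norm_eq_abs, abs_of_pos (freedmanProcess_pos n ω)]
    exact h n
  refine supermartingale_nat (fun n => hsm n) hint fun n => ?_
  set W := μ[fun ω => Y (n + 1) ω ^ 2|𝒢 n]
  set g := fun ω => f n ω * exp (-(3 / 4) * t ^ 2 * W ω)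
  have hg : StronglyMeasurable[𝒢 n] g :=
    (hsm n).mul (continuous_exp.measurable.comp
      (stronglyMeasurable_condExp.measurable.const_mul _)).stronglyMeasurable
  have hfg : f (n + 1) = g * fun ω => exp (t * Y (n + 1) ω) :=
    funext (freedmanProcess_succ n)
  have hY1 : AEStronglyMeasurable (Y (n + 1)) μ :=
    ((hY.stronglyMeasurable (n + 1) le_add_self).mono (𝒢.le _)).aestronglyMeasurable
  have hpull := condExp_mul_of_stronglyMeasurable_left hg (hfg ▸ hint (n + 1))
    (integrable_exp_mul_of_ae_abs_le hY1 (hY.abs_le (n + 1) le_add_self) t)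
  have hbound := condExp_exp_mul_le (𝒢.le n) hY1 (hY.abs_le (n + 1) le_add_self)
    (hY.condExp_eq_zero (n + 1) le_add_self) ht
  rw [hfg]
  filter_upwards [hpull, hbound] with ω h1 h2
  rw [h1, Pi.mul_apply]
  have hg0 : 0 ≤ g ω := (mul_pos (freedmanProcess_pos n ω) (exp_pos _)).le
  calc g ω * μ[fun ω => exp (t * Y (n + 1) ω)|𝒢 n] ω ≤ g ω * (1 + 3 / 4 * t ^ 2 * W ω) :=
        mul_le_mul_of_nonneg_left h2 hg0
    _ ≤ g ω * exp (3 / 4 * t ^ 2 * W ω) := by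
        gcongr
        linarith [add_one_le_exp (3 / 4 * t ^ 2 * W ω)]
    _ = f n ω := by simp only [g, mul_assoc, ← exp_add]; ring_nf; simp

end IsBoundedMartingaleDiff

end Freedman

namespace IsBoundedMartingaleDiff

variable {Ω : Type*} {m0 : MeasurableSpace Ω} {μ : Measure Ω} [IsProbabilityMeasure μ]
  {𝒢 : Filtration ℕ m0} {Y : ℕ → Ω → ℝ} {a δ : ℝ}

lemma measure_exists_le_freedmanProcess_le (hY : IsBoundedMartingaleDiff μ 𝒢 Y a) {t : ℝ}
    (ht : |t| * a ≤ 1) {C : ℝ} (hC : 0 < C) :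
    μ {ω | ∃ n, C ≤ freedmanProcess μ 𝒢 Y t n ω} ≤ ENNReal.ofReal (1 / C) := by
  simpa [freedmanProcess_zero] using (hY.supermartingale_freedmanProcess ht).measure_exists_le_le
    (fun n ω => (freedmanProcess_pos n ω).le) hC

lemma measure_iUnion_exists_le_freedmanProcess_le (hY : IsBoundedMartingaleDiff μ 𝒢 Y a)
    (ha : 0 < a) (hδ0 : 0 < δ) :
    μ (⋃ k : ℕ, {ω | ∃ n, 4 * ((k + 1) * (k + 2)) / δ ≤
      freedmanProcess μ 𝒢 Y ((k + 1) * a)⁻¹ n ω}) ≤ ENNReal.ofReal (δ / 4) := by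
  have hsum : HasSum (fun k : ℕ => δ / 4 * (1 / (((k : ℝ) + 1) * (k + 2)))) (δ / 4) := by
    simpa only [mul_one] using hasSum_one_div_succ_mul_succ.mul_left (δ / 4)
  refine (measure_iUnion_le _).trans ?_
  rw [← hsum.tsum_eq, ENNReal.ofReal_tsum_of_nonneg (fun k => by positivity) hsum.summable]
  refine ENNReal.tsum_le_tsum fun k => ?_
  have hc : (0 : ℝ) < (k + 1) * a := by positivity
  have ht : |((k + 1) * a)⁻¹| * a ≤ 1 := by
    rw [abs_inv, abs_of_pos hc, inv_mul_le_iff₀ hc]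
    nlinarith [Nat.cast_nonneg (α := ℝ) k]
  refine (hY.measure_exists_le_freedmanProcess_le ht (by positivity)).trans_eq ?_
  congr 1
  field_simp

theorem measure_exists_bound_lt_sum_le (hY : IsBoundedMartingaleDiff μ 𝒢 Y a) (ha : 0 < a)
    (hδ0 : 0 < δ) (hδ1 : δ ≤ 1) :
    μ {ω | ∃ m, 1 ≤ m ∧ 2 * √(predictableQuadVar μ 𝒢 Y m ω * log (4 * m / δ)) +
        4 * a * log (4 * m / δ) < ∑ i ∈ Finset.Icc 1 m, Y i ω} ≤ ENNReal.ofReal (δ / 4) := by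
  have hsub : {ω | ∃ m, 1 ≤ m ∧ 2 * √(predictableQuadVar μ 𝒢 Y m ω * log (4 * m / δ)) +
        4 * a * log (4 * m / δ) < ∑ i ∈ Finset.Icc 1 m, Y i ω} ⊆
      {ω | ¬ ∀ n, 0 ≤ predictableQuadVar μ 𝒢 Y n ω ∧ predictableQuadVar μ 𝒢 Y n ω ≤ n * a ^ 2} ∪
        ⋃ k : ℕ, {ω | ∃ n, 4 * ((k + 1) * (k + 2)) / δ ≤
          freedmanProcess μ 𝒢 Y ((k + 1) * a)⁻¹ n ω} := by
    rintro ω ⟨m, hm, hlt⟩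
    by_contra hω
    simp only [Set.mem_union, Set.mem_ofPred_eq, Set.mem_iUnion, not_or, not_not, not_exists,
      not_le] at hω
    obtain ⟨hV, hf⟩ := hω
    exact hlt.not_ge (le_two_sqrt_mul_log_add_of_forall ha hδ0 hδ1 hm (hV m).1 (hV m).2
      fun k => le_mul_log_add_of_exp_lt (by positivity) (hf k m))
  calc _ ≤ _ := (measure_mono hsub).trans (measure_union_le _ _)
    _ ≤ 0 + ENNReal.ofReal (δ / 4) := add_le_add (ae_iff.mp hY.ae_predictableQuadVar_mem).le
        (hY.measure_iUnion_exists_le_freedmanProcess_le ha hδ0)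
    _ = ENNReal.ofReal (δ / 4) := zero_add _

theorem one_sub_le_measure_forall_abs_sum_le (hY : IsBoundedMartingaleDiff μ 𝒢 Y a) (ha : 0 < a)
    (hδ0 : 0 < δ) (hδ1 : δ ≤ 1) :
    1 - ENNReal.ofReal δ ≤ μ {ω | ∀ m : ℕ, 1 ≤ m → |∑ i ∈ Finset.Icc 1 m, Y i ω| ≤
      2 * √((∑ i ∈ Finset.Icc 1 m,
          (μ[fun ω' => Y i ω' ^ 2|𝒢 (i - 1)] ω - (μ[Y i|𝒢 (i - 1)] ω) ^ 2)) * log (4 * m / δ)) +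
        4 * a * log (4 * m / δ)} := by
  set A := {ω | ∀ m : ℕ, 1 ≤ m → |∑ i ∈ Finset.Icc 1 m, Y i ω| ≤
      2 * √((∑ i ∈ Finset.Icc 1 m,
          (μ[fun ω' => Y i ω' ^ 2|𝒢 (i - 1)] ω - (μ[Y i|𝒢 (i - 1)] ω) ^ 2)) * log (4 * m / δ)) +
        4 * a * log (4 * m / δ)}
  have hmean : ∀ᵐ ω ∂μ, ∀ i, 1 ≤ i → μ[Y i|𝒢 (i - 1)] ω = 0 :=
    (ae_ball_iff (Set.to_countable {i : ℕ | 1 ≤ i})).mpr hY.condExp_eq_zero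
  have hcompl : Aᶜ ⊆ {ω | ¬ ∀ i, 1 ≤ i → μ[Y i|𝒢 (i - 1)] ω = 0} ∪
      ({ω | ∃ m, 1 ≤ m ∧ 2 * √(predictableQuadVar μ 𝒢 Y m ω * log (4 * m / δ)) +
        4 * a * log (4 * m / δ) < ∑ i ∈ Finset.Icc 1 m, Y i ω} ∪
      {ω | ∃ m, 1 ≤ m ∧ 2 * √(predictableQuadVar μ 𝒢 (fun i => -Y i) m ω * log (4 * m / δ)) +
        4 * a * log (4 * m / δ) < ∑ i ∈ Finset.Icc 1 m, -Y i ω}) := by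
    intro ω hω
    simp only [A, Set.mem_compl_iff, Set.mem_ofPred_eq, not_forall, not_le] at hω
    obtain ⟨m, hm, hlt⟩ := hω
    by_cases hω : ∀ i, 1 ≤ i → μ[Y i|𝒢 (i - 1)] ω = 0
    · have hvar : ∑ i ∈ Finset.Icc 1 m,
          (μ[fun ω' => Y i ω' ^ 2|𝒢 (i - 1)] ω - (μ[Y i|𝒢 (i - 1)] ω) ^ 2) =
          predictableQuadVar μ 𝒢 Y m ω :=
        Finset.sum_congr rfl fun i hi => by rw [hω i (Finset.mem_Icc.mp hi).1]; ring
      rw [hvar] at hlt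
      rcases lt_abs.mp hlt with h | h
      · exact Or.inr (Or.inl ⟨m, hm, h⟩)
      · refine Or.inr (Or.inr ⟨m, hm, ?_⟩)
        rwa [predictableQuadVar_neg, Finset.sum_neg_distrib]
    · exact Or.inl hω
  have hAc : μ Aᶜ ≤ ENNReal.ofReal δ :=
    calc μ Aᶜ ≤ 0 + (ENNReal.ofReal (δ / 4) + ENNReal.ofReal (δ / 4)) := by
          refine (measure_mono hcompl).trans ((measure_union_le _ _).trans ?_)
          gcongr
          · exact (ae_iff.mp hmean).le
          · exact (measure_union_le _ _).trans (add_le_add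
              (hY.measure_exists_bound_lt_sum_le ha hδ0 hδ1)
              (hY.neg.measure_exists_bound_lt_sum_le ha hδ0 hδ1))
      _ ≤ ENNReal.ofReal δ := by
          rw [zero_add, ← ENNReal.ofReal_add (by positivity) (by positivity)]
          exact ENNReal.ofReal_le_ofReal (by linarith)
  rw [tsub_le_iff_right]
  calc 1 = μ Set.univ := measure_univ.symm
    _ ≤ μ A + μ Aᶜ := measure_univ_le_add_compl A
    _ ≤ μ A + ENNReal.ofReal δ := by gcongr

end IsBoundedMartingaleDiff

section OptionalSkipping

variable {Ω : Type*} {m m0 : MeasurableSpace Ω} {μ : Measure Ω} {F : Filtration ℕ m0}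

lemma ae_abs_sub_condExp_le {Z : Ω → ℝ} {C : ℝ} (hZ : ∀ᵐ ω ∂μ, |Z ω| ≤ C) :
    ∀ᵐ ω ∂μ, |Z ω - μ[Z|m] ω| ≤ 2 * C := by
  filter_upwards [hZ, ae_bdd_abs_condExp_of_ae_bdd_abs (m := m) hZ] with ω h1 h2
  linarith [abs_sub (Z ω) (μ[Z|m] ω)]

lemma condExp_sub_condExp (hm : m ≤ m0) [SigmaFinite (μ.trim hm)] {Z : Ω → ℝ}
    (hZ : Integrable Z μ) : μ[Z - μ[Z|m]|m] =ᵐ[μ] 0 := by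
  filter_upwards [condExp_sub hZ (integrable_condExp (m := m) (f := Z)) m] with ω h
  simp [h, condExp_of_stronglyMeasurable hm stronglyMeasurable_condExp integrable_condExp]

def skippedFiltration (F : Filtration ℕ m0) (τ : ℕ → Ω → ℕ∞)
    (hτ : ∀ m n : ℕ, MeasurableSet[F n] {ω | τ m ω = n}) (hmono : Monotone τ) :
    Filtration ℕ m0 where
  seq m := sigmaAt m0 F (τ (m + 1)) (hτ (m + 1))
  mono' _ _ hij := sigmaAt_mono (hmono (Nat.succ_le_succ hij))
  le' _ := sigmaAt_le

theorem isBoundedMartingaleDiff_skipped [IsFiniteMeasure μ] {X : ℕ → Ω → ℝ} {a : ℝ} (ha : 0 ≤ a)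
    (hX : Adapted F X) (hbdd : ∀ n, ∀ᵐ ω ∂μ, |X n ω| ≤ a / 2) {τ : ℕ → Ω → ℕ∞}
    (hτ : ∀ m n : ℕ, MeasurableSet[F n] {ω | τ m ω = n}) (hsucc : ∀ m ω, τ m ω + 1 ≤ τ (m + 1) ω)
    (hmono : Monotone τ) :
    IsBoundedMartingaleDiff μ (skippedFiltration F τ hτ hmono)
      (fun m ω => stoppedVal X (fun ω' => τ m ω' + 1) ω -
        μ[stoppedVal X (fun ω' => τ m ω' + 1)|sigmaAt m0 F (τ m) (hτ m)] ω) a := by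
  set Z := fun m => stoppedVal X (fun ω' => τ m ω' + 1)
  have hZm : ∀ m, Measurable[sigmaAt m0 F (fun ω => τ m ω + 1) (measurableSet_add_one_eq (hτ m))]
      (Z m) := fun m => measurable_stoppedVal hX
  have hZbdd : ∀ m, ∀ᵐ ω ∂μ, |Z m ω| ≤ a / 2 := fun m => by
    filter_upwards [ae_all_iff.mpr hbdd] with ω h using abs_stoppedVal_le (by linarith) h
  refine ⟨fun i _ => ?_, fun i _ => ?_, fun i hi => ?_⟩
  · exact ((hZm i).stronglyMeasurable.mono (sigmaAt_mono (hσ := hτ (i + 1)) (hsucc i))).sub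
      (stronglyMeasurable_condExp.mono (sigmaAt_mono (hσ := hτ (i + 1)) (hmono i.le_succ)))
  · simpa only [mul_div_cancel₀ a two_ne_zero] using ae_abs_sub_condExp_le (hZbdd i)
  · obtain ⟨j, rfl⟩ := Nat.exists_eq_add_of_le' hi
    have hZint : Integrable (Z (j + 1)) μ :=
      .of_bound ((hZm _).mono sigmaAt_le le_rfl).aestronglyMeasurable (a / 2)
        (by simpa only [Real.norm_eq_abs] using hZbdd _)
    exact condExp_sub_condExp sigmaAt_le hZint

end OptionalSkipping

/-- **Optional-skipping concentration, Freedman part (Theorem 7).**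
Let `(X n, F n)` be adapted with `|X n| ≤ a₁/2` a.s. and `(τ m)` a strictly increasing
sequence of stopping times. With `Y m := X (τ m + 1) - E[X (τ m + 1) | F (τ m)]` and
`G m := F (τ (m+1))`, for every `δ ∈ (0,1)`, with probability at least `1 - δ`,
simultaneously for all `m ≥ 1`,
`|∑_{i=1}^m Y i| ≤ 2 √((∑_{i=1}^m Var(Y i | G (i-1))) log (4m/δ)) + 4 a₁ log (4m/δ)`;
in particular the same bound holds with `m` replaced by any `ℕ`-valued random variable `N`. -/
theorem stmt_6 {Ω : Type*} {m0 : MeasurableSpace Ω} {μ : Measure Ω} [IsProbabilityMeasure μ]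
    (F : Filtration ℕ m0) (X : ℕ → Ω → ℝ) (a₁ : ℝ) (ha₁ : 0 < a₁)
    (hadapt : Adapted F X)
    (hbdd : ∀ n, ∀ᵐ ω ∂μ, |X n ω| ≤ a₁ / 2)
    (τ : ℕ → Ω → ℕ∞)
    (hτ : ∀ m n : ℕ, MeasurableSet[F n] {ω | τ m ω = (n : ℕ∞)})
    (hincr : ∀ m ω, τ m ω < τ (m + 1) ω ∨ (τ m ω = ⊤ ∧ τ (m + 1) ω = ⊤))
    (Y : ℕ → Ω → ℝ)
    (hY : ∀ m, Y m = fun ω =>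
      stoppedVal X (fun ω' => τ m ω' + 1) ω -
        (μ[stoppedVal X (fun ω' => τ m ω' + 1)|sigmaAt m0 F (τ m) (hτ m)]) ω)
    (G : ℕ → MeasurableSpace Ω)
    (hG : ∀ m, G m = sigmaAt m0 F (τ (m + 1)) (hτ (m + 1)))
    (δ : ℝ) (hδ0 : 0 < δ) (hδ1 : δ < 1) :
    1 - ENNReal.ofReal δ ≤
        μ {ω | ∀ m : ℕ, 1 ≤ m →
          |∑ i ∈ Finset.Icc 1 m, Y i ω| ≤
            2 * Real.sqrt ((∑ i ∈ Finset.Icc 1 m,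
                ((μ[fun ω' => (Y i ω') ^ 2|G (i - 1)]) ω - ((μ[Y i|G (i - 1)]) ω) ^ 2)) *
              Real.log (4 * m / δ)) + 4 * a₁ * Real.log (4 * m / δ)} ∧
      ∀ N : Ω → ℕ, Measurable N →
        1 - ENNReal.ofReal δ ≤
          μ {ω | |∑ i ∈ Finset.Icc 1 (N ω), Y i ω| ≤
            2 * Real.sqrt ((∑ i ∈ Finset.Icc 1 (N ω),
                ((μ[fun ω' => (Y i ω') ^ 2|G (i - 1)]) ω - ((μ[Y i|G (i - 1)]) ω) ^ 2)) *
              Real.log (4 * N ω / δ)) + 4 * a₁ * Real.log (4 * N ω / δ)} := by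
  have hsucc : ∀ m ω, τ m ω + 1 ≤ τ (m + 1) ω := fun m ω =>
    (hincr m ω).elim Order.add_one_le_of_lt fun h => h.2 ▸ le_top
  have hmono : Monotone τ :=
    monotone_nat_of_le_succ fun m ω => le_self_add.trans (hsucc m ω)
  obtain rfl : Y = _ := funext hY
  obtain rfl : G = skippedFiltration F τ hτ hmono := funext hG
  have hbound := (isBoundedMartingaleDiff_skipped ha₁.le hadapt hbdd hτ hsucc
    hmono).one_sub_le_measure_forall_abs_sum_le ha₁ hδ0 hδ1.le
  refine ⟨hbound, fun N _ => hbound.trans (measure_mono fun ω hω => ?_)⟩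
  rcases Nat.eq_zero_or_pos (N ω) with h0 | hpos
  · simp [h0]
  · exact hω _ hpos
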